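/- Let φ_irr : M₂(ℝ) → M₄(ℝ) be the map sending the matrix with rows (a, b) and (c, d) to the 4×4 matrix with rows (a³, −√3·a²b, −b³, −√3·ab²), (−√3·a²c, 2abc + a²d, √3·b²d, 2abd + b²c), (−c³, √3·c²d, d³, √3·cd²), (−√3·ac², 2acd + bc², √3·bd², 2bcd + ad²). For every θ ∈ ℝ, let R_θ ∈ M₂(ℝ) be the rotation matrix with rows (cos θ, −sin θ) and (sin θ, cos θ). Then φ_irr(R_θ) lies in the standard copy of U(2) inside Sp(4,ℝ): there exist A, B ∈ M₂(ℝ) such that φ_irr(R_θ) has 2×2 block form (A, B; −B, A) with AᵀA + BᵀB = I₂ and AᵀB = BᵀA. -/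
import Mathlib


open Matrix

/-- The irreducible representation `φ_irr : SL(2,ℝ) → Sp(4,ℝ)` (equation (2.4) of
the paper), written as a map on all `2×2` real matrices. -/
noncomputable def phiIrr (M : Matrix (Fin 2) (Fin 2) ℝ) : Matrix (Fin 4) (Fin 4) ℝ :=
  let a := M 0 0; let b := M 0 1; let c := M 1 0; let d := M 1 1
  !![a^3, -Real.sqrt 3 * a^2 * b, -b^3, -Real.sqrt 3 * a * b^2;
     -Real.sqrt 3 * a^2 * c, 2*a*b*c + a^2*d, Real.sqrt 3 * b^2 * d, 2*a*b*d + b^2*c;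
     -c^3, Real.sqrt 3 * c^2 * d, d^3, Real.sqrt 3 * c * d^2;
     -Real.sqrt 3 * a * c^2, 2*a*c*d + b*c^2, Real.sqrt 3 * b * d^2, 2*b*c*d + a*d^2]

/-- The rotation matrix `R_θ ∈ SO(2)`. -/
noncomputable def rot (θ : ℝ) : Matrix (Fin 2) (Fin 2) ℝ :=
  !![Real.cos θ, -Real.sin θ;
     Real.sin θ, Real.cos θ]

/-- Auxiliary unitarity identity for the blocks of `φ_irr (rot θ)`. -/
lemma phiIrr_aux1 (r c s : ℝ) (h3 : r * r = 3) (hcs : s ^ 2 + c ^ 2 = 1) :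
    (!![c^3, r * c^2 * s; -(r * c^2 * s), c^3 - 2*c*s^2])ᵀ *
      (!![c^3, r * c^2 * s; -(r * c^2 * s), c^3 - 2*c*s^2]) +
    (!![s^3, -(r * c * s^2); r * c * s^2, s^3 - 2*c^2*s])ᵀ *
      (!![s^3, -(r * c * s^2); r * c * s^2, s^3 - 2*c^2*s]) = 1 := by
  ext i j
  fin_cases i <;> fin_cases j
  · simp [Matrix.mul_apply, Fin.sum_univ_succ, Matrix.one_apply]
    linear_combination (c^4*s^2 + c^2*s^4) * h3 + ((s^2+c^2)^2 + (s^2+c^2) + 1) * hcs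
  · simp [Matrix.mul_apply, Fin.sum_univ_succ, Matrix.one_apply]
    ring
  · simp [Matrix.mul_apply, Fin.sum_univ_succ, Matrix.one_apply]
    ring
  · simp [Matrix.mul_apply, Fin.sum_univ_succ, Matrix.one_apply]
    linear_combination (c^4*s^2 + c^2*s^4) * h3 + ((s^2+c^2)^2 + (s^2+c^2) + 1) * hcs

/-- Auxiliary symmetry identity for the blocks of `φ_irr (rot θ)`. -/
lemma phiIrr_aux2 (r c s : ℝ) :
    (!![c^3, r * c^2 * s; -(r * c^2 * s), c^3 - 2*c*s^2])ᵀ *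
      (!![s^3, -(r * c * s^2); r * c * s^2, s^3 - 2*c^2*s]) =
    (!![s^3, -(r * c * s^2); r * c * s^2, s^3 - 2*c^2*s])ᵀ *
      (!![c^3, r * c^2 * s; -(r * c^2 * s), c^3 - 2*c*s^2]) := by
  ext i j
  fin_cases i <;> fin_cases j <;>
    simp [Matrix.mul_apply, Fin.sum_univ_succ] <;> ring

/-- `φ_irr` maps the maximal compact subgroup `SO(2)` of `SL(2,ℝ)` into the standard
copy of `U(2)` inside `Sp(4,ℝ)`, i.e. `φ_irr(R_θ)` has block form `(A, B; −B, A)` with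
`AᵀA + BᵀB = I₂` and `AᵀB = BᵀA`. -/
theorem phiIrr_rot_mem_unitary (θ : ℝ) :
    ∃ A B : Matrix (Fin 2) (Fin 2) ℝ,
      phiIrr (rot θ) =
        Matrix.reindex finSumFinEquiv finSumFinEquiv (Matrix.fromBlocks A B (-B) A) ∧
      Aᵀ * A + Bᵀ * B = 1 ∧ Aᵀ * B = Bᵀ * A := by
  have e0 : (finSumFinEquiv (m := 2) (n := 2)).symm (0 : Fin 4) = Sum.inl (0 : Fin 2) := by
    decide
  have e1 : (finSumFinEquiv (m := 2) (n := 2)).symm (1 : Fin 4) = Sum.inl (1 : Fin 2) := by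
    decide
  have e2 : (finSumFinEquiv (m := 2) (n := 2)).symm (2 : Fin 4) = Sum.inr (0 : Fin 2) := by
    decide
  have e3 : (finSumFinEquiv (m := 2) (n := 2)).symm (3 : Fin 4) = Sum.inr (1 : Fin 2) := by
    decide
  have h3 : Real.sqrt 3 * Real.sqrt 3 = 3 := Real.mul_self_sqrt (by norm_num)
  have hcs : Real.sin θ ^ 2 + Real.cos θ ^ 2 = 1 := Real.sin_sq_add_cos_sq θ
  refine ⟨!![(Real.cos θ)^3, Real.sqrt 3 * (Real.cos θ)^2 * Real.sin θ;
            -(Real.sqrt 3 * (Real.cos θ)^2 * Real.sin θ),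
            (Real.cos θ)^3 - 2*(Real.cos θ)*(Real.sin θ)^2],
          !![(Real.sin θ)^3, -(Real.sqrt 3 * Real.cos θ * (Real.sin θ)^2);
            Real.sqrt 3 * Real.cos θ * (Real.sin θ)^2,
            (Real.sin θ)^3 - 2*(Real.cos θ)^2*(Real.sin θ)],
          ?_, phiIrr_aux1 _ _ _ h3 hcs, phiIrr_aux2 _ _ _⟩
  ext i j
  fin_cases i <;> fin_cases j <;>
    simp [phiIrr, rot, Matrix.reindex_apply, Matrix.submatrix_apply, e0, e1, e2, e3] <;>
    ring
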